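/- Let Q be the set ℕ_{≥1} × ℕ with the transitive relation (t', r') < (t, r) iff t' divides t and t'·r' < t·r. Then the Cantor-Bendixson rank of Q equals ω. -/

import Mathlib

/-- For a set `P` with a relation `r`, `derivSeq r α` is the complement `P \ P_α` of
the iterated set of minimal elements: `P_0` = minimal elements of `P`,
`P_{α+1} = P_α ∪ {minimal elements of P \ P_α}`, unions at limit stages. Thus
`derivSeq r 0 = {p | ∃ q, r q p}` (the non-minimal elements), at successors we remove
the minimal elements of the remaining set, and at limits we take intersections. -/
noncomputable def derivSeq {P : Type*} (r : P → P → Prop) (o : Ordinal) : Set P :=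
  Ordinal.limitRecOn o {p | ∃ q, r q p}
    (fun _ s => {p ∈ s | ∃ q ∈ s, r q p})
    (fun o _ ih => ⋂ (o' : Ordinal) (h : o' < o), ih o' h)

/-- The Cantor–Bendixson rank of `(P, r)`: the least ordinal `α` with
`P \ P_α = P \ P_{α+1}`. -/
noncomputable def rCB {P : Type*} (r : P → P → Prop) : Ordinal :=
  sInf {α : Ordinal | derivSeq r α = derivSeq r (α + 1)}

section aux

lemma derivSeq_zero' {P : Type*} (r : P → P → Prop) :
    derivSeq r 0 = {p | ∃ q, r q p} := Ordinal.limitRecOn_zero _ _ _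

lemma derivSeq_succ' {P : Type*} (r : P → P → Prop) (o : Ordinal) :
    derivSeq r (o + 1) = {p ∈ derivSeq r o | ∃ q ∈ derivSeq r o, r q p} :=
  Ordinal.limitRecOn_succ _ _ _ _

lemma derivSeq_limit' {P : Type*} (r : P → P → Prop) {o : Ordinal} (h : Order.IsSuccLimit o) :
    derivSeq r o = ⋂ (o' : Ordinal) (_ : o' < o), derivSeq r o' :=
  Ordinal.limitRecOn_limit _ _ _ _ h

abbrev Qrel : ({a : ℕ // 1 ≤ a} × ℕ) → ({a : ℕ // 1 ≤ a} × ℕ) → Prop :=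
  fun x y => x.1.1 ∣ y.1.1 ∧ x.1.1 * x.2 < y.1.1 * y.2

lemma derivSeq_nat (n : ℕ) :
    derivSeq Qrel (n : Ordinal) =
      {x : {a : ℕ // 1 ≤ a} × ℕ | 1 ≤ x.2 ∧ n < x.1.1 * x.2} := by
  induction n with
  | zero =>
    rw [Nat.cast_zero, derivSeq_zero']
    ext ⟨⟨t, ht⟩, r⟩
    constructor
    · rintro ⟨⟨⟨t', ht'⟩, r'⟩, _, hlt⟩
      dsimp only at hlt
      have h2 : (0:ℕ) < t * r := lt_of_le_of_lt (Nat.zero_le _) hlt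
      have hr : 1 ≤ r := by
        rcases Nat.eq_zero_or_pos r with h | h
        · subst h; simp at h2
        · exact h
      exact ⟨hr, h2⟩
    · rintro ⟨hr, hlt⟩
      exact ⟨⟨⟨1, le_refl 1⟩, 0⟩, one_dvd _, by simpa using hlt⟩
  | succ n ih =>
    rw [Nat.cast_succ, derivSeq_succ', ih]
    ext ⟨⟨t, ht⟩, r⟩
    constructor
    · rintro ⟨⟨hr, hn⟩, ⟨⟨t', ht'⟩, r'⟩, ⟨hr', hn'⟩, _, hlt⟩
      dsimp only at hr hn hr' hn' hlt
      exact ⟨hr, show n + 1 < t * r by omega⟩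
    · rintro ⟨hr, hn⟩
      dsimp only at hr hn
      exact ⟨⟨hr, show (n:ℕ) < t * r by omega⟩, ⟨⟨1, le_refl 1⟩, n + 1⟩,
        ⟨by omega, by simp⟩,
        one_dvd _, show 1 * (n + 1) < t * r by simpa using hn⟩

lemma derivSeq_omega : derivSeq Qrel Ordinal.omega0 = ∅ := by
  rw [derivSeq_limit' _ Ordinal.isSuccLimit_omega0]
  ext ⟨⟨t, ht⟩, r⟩
  simp only [Set.mem_iInter, Set.mem_empty_iff_false, iff_false, not_forall]
  exact ⟨(t * r : ℕ), Ordinal.nat_lt_omega0 _, by rw [derivSeq_nat]; simp⟩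

end aux


/-- Let `Q = ℕ_{≥1} × ℕ` with the transitive relation
`(t',r') < (t,r) ↔ t' ∣ t ∧ t'·r' < t·r`. Then the Cantor–Bendixson rank of `Q`
equals `ω`. -/
theorem stmt15 :
    rCB (fun x y : {a : ℕ // 1 ≤ a} × ℕ =>
        x.1.1 ∣ y.1.1 ∧ x.1.1 * x.2 < y.1.1 * y.2)
      = Ordinal.omega0 := by
  have hmem : Ordinal.omega0 ∈
      {α : Ordinal | derivSeq Qrel α = derivSeq Qrel (α + 1)} := by
    rw [Set.mem_setOf_eq, derivSeq_succ', derivSeq_omega]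
    simp
  apply le_antisymm
  · exact csInf_le' hmem
  · refine le_csInf ⟨_, hmem⟩ fun b hb => ?_
    by_contra hlt
    push_neg at hlt
    obtain ⟨n, rfl⟩ := Ordinal.lt_omega0.mp hlt
    rw [Set.mem_setOf_eq, ← Nat.cast_succ, derivSeq_nat, derivSeq_nat,
      Set.ext_iff] at hb
    have := (hb ⟨⟨1, le_refl 1⟩, n + 1⟩).mp ⟨by omega, by simp⟩
    simp at this
    exact lt_irrefl _ this
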